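/- For any density matrix ρ and any orthogonal projector P (of the same size), ‖ρ P‖₁ ≤ √(tr(ρ P)). -/

import Mathlib

/-!
Let `U = A (AᴴA)^{-1/2}` (the inverse square root taken to be `0` on the kernel). Then `Uᴴ U ≤ 1`
and `Uᴴ A = √(AᴴA)`, so `‖A‖₁ = Re tr (Uᴴ A)`. For `A = B C` this is the Frobenius inner product of
`Bᴴ` and `C Uᴴ`, and Cauchy–Schwarz gives Hölder's inequality `‖B C‖₁ ≤ ‖B‖₂ ‖C‖₂`. Writing
`ρ P = √ρ (√ρ P)` yields `‖ρ P‖₁ ≤ √(tr ρ) · √(tr (P ρ P)) = √(tr (ρ P))`.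
-/

open Matrix
open scoped ComplexOrder

/-- The trace norm (Schatten 1-norm) of a complex square matrix: `‖A‖₁ = tr √(AᴴA)`. -/
noncomputable def traceNorm {m : Type*} [Fintype m] [DecidableEq m] (A : Matrix m m ℂ) : ℝ :=
  ((Matrix.posSemidef_conjTranspose_mul_self A).1.eigenvectorUnitary.1 *
    Matrix.diagonal (((↑) : ℝ → ℂ) ∘ (√·) ∘ (Matrix.posSemidef_conjTranspose_mul_self A).1.eigenvalues) *
    (star (Matrix.posSemidef_conjTranspose_mul_self A).1.eigenvectorUnitary : Matrix m m ℂ)).trace.re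

open scoped MatrixOrder

namespace Matrix

variable {𝕜 : Type*} [RCLike 𝕜] {m n : Type*} [Fintype m] [Fintype n]

theorem re_trace_conjTranspose_mul_le (X Y : Matrix m n 𝕜) :
    RCLike.re (Xᴴ * Y).trace ≤
      √(RCLike.re (Xᴴ * X).trace) * √(RCLike.re (Yᴴ * Y).trace) := by
  have inner_vec (X Y : Matrix m n 𝕜) :
      inner 𝕜 (WithLp.toLp 2 X.vec) (WithLp.toLp 2 Y.vec) = (Xᴴ * Y).trace := by
    rw [EuclideanSpace.inner_eq_star_dotProduct, dotProduct_comm, star_vec_dotProduct_vec]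
  simpa only [norm_eq_sqrt_re_inner (𝕜 := 𝕜), inner_vec] using
    re_inner_le_norm (𝕜 := 𝕜) (WithLp.toLp 2 X.vec) (WithLp.toLp 2 Y.vec)

variable [DecidableEq n]

theorem re_trace_mul_mul_conjTranspose_le {Q : Matrix n n 𝕜} (hQ : Q ≤ 1) (C : Matrix m n 𝕜) :
    RCLike.re (C * Q * Cᴴ).trace ≤ RCLike.re (C * Cᴴ).trace := by
  have h :=
    ((nonneg_iff_posSemidef.mp (sub_nonneg.mpr hQ)).mul_mul_conjTranspose_same C).trace_nonneg
  rw [Matrix.mul_sub, Matrix.sub_mul, Matrix.mul_one, trace_sub, RCLike.nonneg_iff, map_sub] at h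
  linarith [h.1]

theorem exists_conjTranspose_mul_eq_cfc_sqrt (A : Matrix m n 𝕜) :
    ∃ U : Matrix m n 𝕜, Uᴴ * U ≤ 1 ∧ Uᴴ * A = cfc Real.sqrt (Aᴴ * A) := by
  set H := Aᴴ * A
  have hcont (f : ℝ → ℝ) : ContinuousOn f (spectrum ℝ H) :=
    (finite_real_spectrum (A := H)).continuousOn f
  have hH : IsSelfAdjoint H := isHermitian_conjTranspose_mul_self A
  -- The junk value `(√x)⁻¹ = 0` for `x ≤ 0` is what makes `G` vanish on the kernel of `H`.
  set G := cfc (fun x : ℝ ↦ (√x)⁻¹) H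
  have hG : Gᴴ = G := (cfc_predicate _ H : IsSelfAdjoint G)
  have hGH : G * H = cfc Real.sqrt H := by
    conv_lhs => rw [← cfc_id' ℝ H]
    rw [← cfc_mul _ _ H (hcont _) (hcont _)]
    congr with x
    rw [← div_eq_inv_mul, Real.div_sqrt]
  refine ⟨A * G, ?_, ?_⟩
  · rw [conjTranspose_mul, hG, Matrix.mul_assoc, ← Matrix.mul_assoc Aᴴ, ← Matrix.mul_assoc G, hGH,
      ← cfc_mul _ _ H (hcont _) (hcont _)]
    exact cfc_le_one _ H fun x _ ↦ mul_inv_le_one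
  · rw [conjTranspose_mul, hG, Matrix.mul_assoc, hGH]

end Matrix

section TraceNorm

variable {m n : Type*} [Fintype m] [Fintype n] [DecidableEq n]

theorem traceNorm_eq_re_trace_cfc_sqrt (A : Matrix n n ℂ) :
    traceNorm A = (cfc Real.sqrt (Aᴴ * A)).trace.re := by
  rw [(isHermitian_conjTranspose_mul_self A).cfc_eq, IsHermitian.cfc, Unitary.conjStarAlgAut_apply]
  rfl

theorem traceNorm_mul_le (B : Matrix n m ℂ) (C : Matrix m n ℂ) :
    traceNorm (B * C) ≤ √(Bᴴ * B).trace.re * √(Cᴴ * C).trace.re := by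
  obtain ⟨U, hU, hUBC⟩ := exists_conjTranspose_mul_eq_cfc_sqrt (B * C)
  calc traceNorm (B * C) = (Bᴴᴴ * (C * Uᴴ)).trace.re := by
        rw [traceNorm_eq_re_trace_cfc_sqrt, ← hUBC, conjTranspose_conjTranspose, trace_mul_comm,
          Matrix.mul_assoc]
    _ ≤ √(Bᴴᴴ * Bᴴ).trace.re * √((C * Uᴴ)ᴴ * (C * Uᴴ)).trace.re := by
        simpa only [RCLike.re_to_complex] using re_trace_conjTranspose_mul_le Bᴴ (C * Uᴴ)
    _ = √(Bᴴ * B).trace.re * √(C * (Uᴴ * U) * Cᴴ).trace.re := by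
        rw [conjTranspose_conjTranspose, trace_mul_comm Bᴴ, conjTranspose_mul,
          conjTranspose_conjTranspose, trace_mul_comm (U * Cᴴ)]
        simp only [Matrix.mul_assoc]
    _ ≤ √(Bᴴ * B).trace.re * √(C * Cᴴ).trace.re := by
        gcongr √_ * √?_
        simpa only [RCLike.re_to_complex] using re_trace_mul_mul_conjTranspose_le hU C
    _ = √(Bᴴ * B).trace.re * √(Cᴴ * C).trace.re := by rw [trace_mul_comm C]

end TraceNorm

/-- For any density matrix `ρ` and orthogonal projector `P`, `‖ρ P‖₁ ≤ √(tr(ρ P))`. -/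
theorem traceNorm_densityMatrix_mul_proj_le {d : ℕ} (ρ P : Matrix (Fin d) (Fin d) ℂ)
    (hρ : ρ.PosSemidef) (hρtr : ρ.trace = 1)
    (hP_herm : Pᴴ = P) (hP_idem : P * P = P) :
    traceNorm (ρ * P) ≤ Real.sqrt ((ρ * P).trace.re) := by
  set S := CFC.sqrt ρ
  have hSS : S * S = ρ := CFC.sqrt_mul_sqrt_self ρ hρ.nonneg
  have hS : Sᴴ = S := (CFC.sqrt_nonneg ρ).posSemidef.isHermitian
  calc traceNorm (ρ * P) = traceNorm (S * (S * P)) := by rw [← Matrix.mul_assoc, hSS]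
    _ ≤ √(Sᴴ * S).trace.re * √((S * P)ᴴ * (S * P)).trace.re := traceNorm_mul_le _ _
    _ = √(ρ * P).trace.re := by
        rw [conjTranspose_mul, hS, hP_herm, hSS, Matrix.mul_assoc, ← Matrix.mul_assoc S, hSS,
          trace_mul_comm, Matrix.mul_assoc, hP_idem, hρtr, Complex.one_re, Real.sqrt_one, one_mul]
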